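/- For four pairwise distinct complex numbers a,b,c,d, the inserted points p_ab = f(d,a,b,c) and p_cd = f(b,c,d,a) satisfy cr(a, p_ab, b, p_cd) = -1, i.e., p_cd is the harmonic conjugate of p_ab with respect to a and b. -/

import Mathlib

/-!
The square root `s` entering `p_ab = f(d,a,b,c)` and `p_cd = f(b,c,d,a)` is the same for both
points, since the two cross-ratios under the root differ by a double transposition. Both points are
then Möbius expressions in `s`, and the harmonic relation `2ab + 2 p_ab p_cd = (p_ab + p_cd)(a + b)`,
cleared of denominators, is `(a - b)(b - d)` times the relation `(a - d)(c - b) s² + (b - d)(a - c) = 0`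
that defines `s`.
-/

open Complex

/-- Complex cross-ratio. -/
noncomputable def crC (a b c d : ℂ) : ℂ := (a - b) * (c - d) / ((b - c) * (d - a))

/-- Principal square root of the cross-ratio `cr(c,a,b,d)`. -/
noncomputable def sqrtQ (a b c d : ℂ) : ℂ := (crC c a b d) ^ ((1 : ℂ) / 2)

/-- The point-insertion rule. -/
noncomputable def fIns (a b c d : ℂ) : ℂ :=
  (c * (b - a) * sqrtQ a b c d + b * (c - a)) / ((b - a) * sqrtQ a b c d + (c - a))

theorem crC_swap_pairs (a b c d : ℂ) : crC b a d c = crC a b c d := by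
  unfold crC
  congr 1 <;> ring

theorem crC_mul_denom {a b c d : ℂ} (hbc : b ≠ c) (hda : d ≠ a) :
    crC a b c d * ((b - c) * (d - a)) = (a - b) * (c - d) :=
  div_mul_cancel₀ _ (mul_ne_zero (sub_ne_zero.mpr hbc) (sub_ne_zero.mpr hda))

theorem crC_eq_neg_one_iff {a b p q : ℂ} (hp : p - b ≠ 0) (hq : q - a ≠ 0) :
    crC a p b q = -1 ↔ 2 * a * b + 2 * p * q = (p + q) * (a + b) := by
  unfold crC
  rw [div_eq_iff (mul_ne_zero hp hq)]
  constructor <;> intro h <;> linear_combination h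

theorem sq_sqrtQ (a b c d : ℂ) : sqrtQ a b c d ^ 2 = crC c a b d := by
  unfold sqrtQ
  rw [one_div]
  exact cpow_ofNat_inv_pow _ 2

theorem sqrtQ_swap_pairs (a b c d : ℂ) : sqrtQ c d a b = sqrtQ a b c d := by
  unfold sqrtQ
  rw [crC_swap_pairs]

theorem harmonic_of_sq_eq {a b c d s p q : ℂ}
    (hs : (a - d) * (c - b) * s ^ 2 + (b - d) * (a - c) = 0)
    (hD₁ : (a - d) * s + (b - d) ≠ 0) (hD₂ : (c - b) * s + (d - b) ≠ 0)
    (hp : p * ((a - d) * s + (b - d)) = b * (a - d) * s + a * (b - d))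
    (hq : q * ((c - b) * s + (d - b)) = d * (c - b) * s + c * (d - b)) :
    2 * a * b + 2 * p * q = (p + q) * (a + b) := by
  refine mul_right_cancel₀ (mul_ne_zero hD₁ hD₂) ?_
  linear_combination (2 * q * ((c - b) * s + (d - b)) - ((c - b) * s + (d - b)) * (a + b)) * hp
    + (2 * (b * (a - d) * s + a * (b - d)) - ((a - d) * s + (b - d)) * (a + b)) * hq
    + (a - b) * (b - d) * hs

theorem stmt4_general (a b c d : ℂ)
    (had : a ≠ d) (hbc : b ≠ c)
    (hden1 : (a - d) * sqrtQ d a b c + (b - d) ≠ 0)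
    (hden2 : (c - b) * sqrtQ b c d a + (d - b) ≠ 0)
    (hb : fIns d a b c - b ≠ 0) (ha : fIns b c d a - a ≠ 0) :
    crC a (fIns d a b c) b (fIns b c d a) = -1 := by
  have hs : sqrtQ b c d a = sqrtQ d a b c := sqrtQ_swap_pairs d a b c
  rw [crC_eq_neg_one_iff hb ha]
  rw [hs] at hden2
  have hsq : (a - d) * (c - b) * sqrtQ d a b c ^ 2 + (b - d) * (a - c) = 0 := by
    rw [sq_sqrtQ]
    linear_combination -crC_mul_denom had.symm hbc.symm
  refine harmonic_of_sq_eq hsq hden1 hden2 (div_mul_cancel₀ _ hden1) ?_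
  rw [fIns, hs]
  exact div_mul_cancel₀ _ hden2

theorem stmt4 (a b c d : ℂ)
    (hab : a ≠ b) (hac : a ≠ c) (had : a ≠ d) (hbc : b ≠ c) (hbd : b ≠ d) (hcd : c ≠ d)
    (habcd : a + b - c - d ≠ 0)
    (hden1 : (a - d) * sqrtQ d a b c + (b - d) ≠ 0)
    (hden2 : (c - b) * sqrtQ b c d a + (d - b) ≠ 0)
    (hb : fIns d a b c - b ≠ 0) (ha : fIns b c d a - a ≠ 0) :
    crC a (fIns d a b c) b (fIns b c d a) = -1 :=
  stmt4_general a b c d had hbc hden1 hden2 hb ha
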